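/- Let C be a category with terminal object T. The later functor L^C : C^∞ → C^∞, defined by (L^C X)(0) = T, (L^C X)(n+1) = X(n) on objects, and (L^C f)_0 = !_T, (L^C f)_{n+1} = f_n on morphisms, is a well-defined functor and is S-enriched with respect to the enrichment of C^∞ in the topos of trees. -/

import Mathlib

open CategoryTheory CategoryTheory.Limits

universe v u

/-- An object of `C^∞ = C^{ℕᵒᵖ}`: a cochain `X(0) ← X(1) ← X(2) ← ⋯` in `C`. -/
structure GObj (C : Type u) [Category.{v} C] where
  obj : ℕ → C
  res : ∀ n, obj (n + 1) ⟶ obj n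

namespace GObj

variable {C : Type u} [Category.{v} C]

/-- A morphism in `C^∞`: a natural transformation between cochains. -/
@[ext]
structure GHom (X Y : GObj C) where
  app : ∀ n, X.obj n ⟶ Y.obj n
  nat : ∀ n, X.res n ≫ app n = app (n + 1) ≫ Y.res n

instance : Category (GObj C) where
  Hom := GHom
  id X := { app := fun _ => 𝟙 _, nat := by intro n; simp }
  comp {X Y Z} f g :=
    { app := fun n => f.app n ≫ g.app n
      nat := by
        intro n
        rw [← Category.assoc, f.nat, Category.assoc, g.nat, ← Category.assoc] }
  id_comp f := by apply GHom.ext; funext n; simp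
  comp_id f := by apply GHom.ext; funext n; simp
  assoc f g h := by apply GHom.ext; funext n; simp

@[simp] theorem id_app (X : GObj C) (n : ℕ) : (𝟙 X : X ⟶ X).app n = 𝟙 (X.obj n) := rfl

@[simp] theorem comp_app {X Y Z : GObj C} (f : X ⟶ Y) (g : Y ⟶ Z) (n : ℕ) :
    (f ≫ g).app n = f.app n ≫ g.app n := rfl

/-- The constant cochain on an object of `C`. -/
def constG (T : C) : GObj C where
  obj _ := T
  res _ := 𝟙 T

end GObj

namespace GObj

variable {C : Type u} [Category.{v} C]

/-- A truncated natural transformation `(f_0, …, f_n)` from `X` to `Y`. -/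
@[ext]
structure TruncHom (X Y : GObj C) (n : ℕ) where
  app : ∀ k, k ≤ n → (X.obj k ⟶ Y.obj k)
  nat : ∀ k (h : k + 1 ≤ n),
    X.res k ≫ app k (Nat.le_of_succ_le h) = app (k + 1) h ≫ Y.res k

/-- Restriction of truncated natural transformations: forget the last component. -/
def tres {X Y : GObj C} {n : ℕ} (f : TruncHom X Y (n + 1)) : TruncHom X Y n where
  app k h := f.app k (h.trans (Nat.le_succ n))
  nat k h := f.nat k (h.trans (Nat.le_succ n))

/-- The truncated identity natural transformation. -/
def tid (X : GObj C) (n : ℕ) : TruncHom X X n where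
  app k _ := 𝟙 (X.obj k)
  nat k _ := by simp

/-- Componentwise composition of truncated natural transformations. -/
def tcomp {X Y Z : GObj C} {n : ℕ} (g : TruncHom Y Z n) (f : TruncHom X Y n) :
    TruncHom X Z n where
  app k h := f.app k h ≫ g.app k h
  nat k h := by
    rw [← Category.assoc, f.nat k h, Category.assoc, g.nat k h, ← Category.assoc]

/-- The truncation of a (global) morphism of `C^∞`. -/
def trunc {X Y : GObj C} (f : X ⟶ Y) (n : ℕ) : TruncHom X Y n where
  app k _ := f.app k
  nat k _ := f.nat k

/-- The hom-object of the `S`-enrichment of `C^∞`: an object of the topos of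
trees `S = Set^{ℕᵒᵖ}` whose `n`-th component is the set of truncated natural
transformations of length `n`, with restriction forgetting the last component. -/
def homObj (X Y : GObj C) : GObj (Type v) where
  obj n := TruncHom X Y n
  res _ := TypeCat.ofHom tres

end GObj

namespace GObj

/-- Object part of the later functor on the topos of trees. -/
def LaterTObj (A : GObj (Type u)) : ℕ → Type u
  | 0 => PUnit
  | n + 1 => A.obj n

/-- The later functor `L : S → S` on (objects of) the topos of trees. -/
def LaterT (A : GObj (Type u)) : GObj (Type u) where
  obj := LaterTObj A
  res n :=
    match n with
    | 0 => TypeCat.ofHom (fun _ => PUnit.unit)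
    | n + 1 => A.res n

/-- The `next` natural transformation `ν_A : A → L A` in the topos of trees. -/
def nextT (A : GObj (Type u)) : A ⟶ LaterT A where
  app n :=
    match n with
    | 0 => TypeCat.ofHom (fun _ => PUnit.unit)
    | n + 1 => A.res n
  nat n := by
    cases n with
    | zero => rfl
    | succ n => rfl

/-- Pointwise cartesian product in the topos of trees. -/
def GProd (A B : GObj (Type u)) : GObj (Type u) where
  obj n := A.obj n × B.obj n
  res n := TypeCat.ofHom (fun p => (A.res n p.1, B.res n p.2))

/-- Pairing for the pointwise cartesian product. -/
def gpair {Z A B : GObj (Type u)} (f : Z ⟶ A) (g : Z ⟶ B) : Z ⟶ GProd A B where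
  app n := TypeCat.ofHom (fun z => (f.app n z, g.app n z))
  nat n := by
    ext z
    exact Prod.ext (types_congr_hom (f.nat n) z) (types_congr_hom (g.nat n) z)

/-- Evaluation `[A → B] × A → B` for the exponential `[A → B] = homObj A B`
in the topos of trees. -/
def gev (A B : GObj (Type u)) : GProd (homObj A B) A ⟶ B where
  app n := TypeCat.ofHom (fun p => p.1.app n (le_refl n) p.2)
  nat n := by
    ext p
    exact types_congr_hom (p.1.nat n (le_refl (n + 1))) p.2

end GObj
namespace GObj

variable {C : Type u} [Category.{v} C]

/-- Object part (componentwise) of the later functor on `C^∞`. -/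
def LObjAux (T : C) (X : GObj C) : ℕ → C
  | 0 => T
  | n + 1 => X.obj n

/-- The later functor on objects: shift the cochain and put the terminal object
in degree `0`. -/
def LObj {T : C} (hT : IsTerminal T) (X : GObj C) : GObj C where
  obj := LObjAux T X
  res n :=
    match n with
    | 0 => hT.from (X.obj 0)
    | n + 1 => X.res n

/-- Morphism part (componentwise) of the later functor on `C^∞`. -/
def LMapAux {T : C} (hT : IsTerminal T) {X Y : GObj C} (f : X ⟶ Y) :
    ∀ n, LObjAux T X n ⟶ LObjAux T Y n
  | 0 => 𝟙 T
  | n + 1 => f.app n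

/-- The later functor `L^C : C^∞ → C^∞`. -/
def LFunctor {T : C} (hT : IsTerminal T) : GObj C ⥤ GObj C where
  obj X := LObj hT X
  map {X Y} f :=
    { app := LMapAux hT f
      nat := by
        intro n
        cases n with
        | zero => exact hT.hom_ext _ _
        | succ n => exact f.nat n }
  map_id X := by
    apply GHom.ext; funext n
    cases n with
    | zero => rfl
    | succ n => rfl
  map_comp f g := by
    apply GHom.ext; funext n
    cases n with
    | zero => exact (Category.id_comp _).symm
    | succ n => rfl

/-- The `next` natural transformation `ν^C_X : X → L^C X`, componentwise. -/
def gnext {T : C} (hT : IsTerminal T) (X : GObj C) : X ⟶ LObj hT X where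
  app n :=
    match n with
    | 0 => hT.from (X.obj 0)
    | n + 1 => X.res n
  nat n := by
    cases n with
    | zero => exact hT.hom_ext _ _
    | succ n => rfl

end GObj

namespace GObj

variable {C : Type u} [Category.{v} C]

/-- An `S`-enriched endofunctor of `C^∞`: a functor together with its action on
the hom-objects of the enrichment in the topos of trees (a morphism in `S`,
compatible with enriched identities and composition, and with the underlying
functor). -/
structure EnrFunctor (C : Type u) [Category.{v} C] where
  F : GObj C ⥤ GObj C
  Φ : ∀ (X Y : GObj C) (n : ℕ), TruncHom X Y n → TruncHom (F.obj X) (F.obj Y) n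
  Φ_res : ∀ (X Y : GObj C) (n : ℕ) (f : TruncHom X Y (n + 1)),
    tres (Φ X Y (n + 1) f) = Φ X Y n (tres f)
  Φ_id : ∀ (X : GObj C) (n : ℕ), Φ X X n (tid X n) = tid (F.obj X) n
  Φ_comp : ∀ (X Y Z : GObj C) (n : ℕ) (g : TruncHom Y Z n) (f : TruncHom X Y n),
    Φ X Z n (tcomp g f) = tcomp (Φ Y Z n g) (Φ X Y n f)
  Φ_map : ∀ (X Y : GObj C) (f : X ⟶ Y) (n : ℕ), Φ X Y n (trunc f n) = trunc (F.map f) n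

/-- A locally contractive `S`-enriched endofunctor: the action on hom-objects
factorises through the `next` natural transformation `ν : id ⇒ L` of `S`
via a family `G` which is itself a morphism in `S` and behaves like a functor
(compatibly with enriched identities and composition). -/
def EnrFunctor.LocallyContractive (E : EnrFunctor C) : Prop :=
  ∃ G : ∀ (X Y : GObj C) (n : ℕ),
      (LaterT (homObj X Y)).obj n → TruncHom (E.F.obj X) (E.F.obj Y) n,
    (∀ (X Y : GObj C) (f : TruncHom X Y 0), E.Φ X Y 0 f = G X Y 0 PUnit.unit) ∧
    (∀ (X Y : GObj C) (n : ℕ) (f : TruncHom X Y (n + 1)),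
      E.Φ X Y (n + 1) f = G X Y (n + 1) (tres f)) ∧
    (∀ (X Y : GObj C) (n : ℕ) (x : (LaterT (homObj X Y)).obj (n + 1)),
      tres (G X Y (n + 1) x) = G X Y n ((LaterT (homObj X Y)).res n x)) ∧
    (∀ X : GObj C, G X X 0 PUnit.unit = tid (E.F.obj X) 0) ∧
    (∀ (X : GObj C) (n : ℕ), G X X (n + 1) (tid X n) = tid (E.F.obj X) (n + 1)) ∧
    (∀ (X Y Z : GObj C) (u : PUnit),
      G X Z 0 u = tcomp (G Y Z 0 u) (G X Y 0 u)) ∧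
    (∀ (X Y Z : GObj C) (n : ℕ) (g : TruncHom Y Z n) (f : TruncHom X Y n),
      G X Z (n + 1) (tcomp g f) = tcomp (G Y Z (n + 1) g) (G X Y (n + 1) f))

/-- `α : X ⟶ Y` is an `n`-isomorphism if its first `n` components are isomorphisms. -/
def IsNIso {X Y : GObj C} (α : X ⟶ Y) (n : ℕ) : Prop :=
  ∀ k, k < n → IsIso (α.app k)

/-- Composition of `S`-enriched endofunctors. -/
def EnrFunctor.comp (F G : EnrFunctor C) : EnrFunctor C where
  F := G.F ⋙ F.F
  Φ X Y n f := F.Φ _ _ n (G.Φ X Y n f)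
  Φ_res := by intro X Y n f; rw [F.Φ_res, G.Φ_res]
  Φ_id := by intro X n; rw [G.Φ_id, F.Φ_id]; (try rfl)
  Φ_comp := by intro X Y Z n g f; rw [G.Φ_comp, F.Φ_comp]
  Φ_map := by intro X Y f n; rw [G.Φ_map, F.Φ_map]; (try rfl)

end GObj

namespace GObj

variable {C : Type u} [Category.{v} C] {T : C} (hT : IsTerminal T)

def laterTruncHom {X Y : GObj C} {n : ℕ} (f : TruncHom X Y n) :
    TruncHom (LObj hT X) (LObj hT Y) n where
  app k h :=
    match k with
    | 0 => 𝟙 T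
    | k + 1 => f.app k (Nat.le_of_succ_le h)
  nat k h :=
    match k with
    | 0 => hT.hom_ext _ _
    | k + 1 => f.nat k (Nat.le_of_succ_le h)

/-- Degree `0` of `LObj hT Y` is terminal, so only the shifted components matter. -/
theorem TruncHom.ext_lObj {X Y : GObj C} {n : ℕ} {f g : TruncHom X (LObj hT Y) n}
    (h : ∀ k (hk : k + 1 ≤ n), f.app (k + 1) hk = g.app (k + 1) hk) : f = g := by
  ext k hk
  cases k with
  | zero => exact hT.hom_ext _ _
  | succ k => exact h k hk

def laterEnrFunctor : EnrFunctor C where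
  F := LFunctor hT
  Φ _ _ _ f := laterTruncHom hT f
  Φ_res _ _ _ _ := TruncHom.ext_lObj hT fun _ _ => rfl
  Φ_id _ _ := TruncHom.ext_lObj hT fun _ _ => rfl
  Φ_comp _ _ _ _ _ _ := TruncHom.ext_lObj hT fun _ _ => rfl
  Φ_map _ _ _ _ := TruncHom.ext_lObj hT fun _ _ => rfl

end GObj

open GObj in
/-- The later functor `L^C : C^∞ → C^∞`, defined by `(L^C X)(0) = T`,
`(L^C X)(n+1) = X(n)`, `(L^C f)_0 = !_T` and `(L^C f)_{n+1} = f_n`, is a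
well-defined functor (namely `LFunctor hT`) and is `S`-enriched. -/
theorem later_functor_well_defined_and_enriched {C : Type u} [Category.{v} C]
    {T : C} (hT : IsTerminal T) :
    (∀ X : GObj C, ((LFunctor hT).obj X).obj 0 = T ∧
      ∀ n, ((LFunctor hT).obj X).obj (n + 1) = X.obj n) ∧
    (∀ (X Y : GObj C) (f : X ⟶ Y),
      ((LFunctor hT).map f).app 0 = hT.from T ∧
      ∀ n, ((LFunctor hT).map f).app (n + 1) = f.app n) ∧
    ∃ E : EnrFunctor C, E.F = LFunctor hT :=
  ⟨fun _ => ⟨rfl, fun _ => rfl⟩, fun _ _ _ => ⟨hT.hom_ext _ _, fun _ => rfl⟩,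
    laterEnrFunctor hT, rfl⟩
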